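/- Assume k is infinite. The set G_2 = {(a,b) ∈ k^N × k^N : the pair (f̄_a, f̄_b) is an R-regular sequence} is nonempty if and only if the depth of R is at least 2, i.e., if and only if there exist homogeneous elements g_1, g_2 of positive degree in the irrelevant maximal ideal R_+ forming an R-regular sequence. -/

import Mathlib

/-!
The forms `f̄_a` are homogeneous of degree `d ≥ 1`, hence lie in `R_+`; this gives one direction.
Conversely, `a ↦ f̄_a` is a `k`-linear family, and since every `x_l ^ d` is one of the monomials, a
prime containing all `f̄_a` contains `R_+`, hence `g₁` and `g₂`. A vector space over an infinite
field is not a finite union of proper subspaces, so a linear family that is not contained in any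
of the finitely many associated primes of a module contains a nonzerodivisor on it. Applied to `R`
this gives `f̄_a` regular on `R`; applied to `R/f̄_a R` it gives `f̄_b` regular on the quotient,
because a regular sequence `g₁, g₂` of `R` cannot annihilate a common nonzero element of
`R/xR` for a nonzerodivisor `x`. Finally `R_+ ≠ R` since `𝔭` is homogeneous and proper.
-/

open MvPolynomial Pointwise RingTheory.Sequence

section RegularSequences

variable {R M : Type*} [CommRing R] [AddCommGroup M] [Module R M]

theorem QuotSMulTop.eq_zero_of_smul_eq_zero_of_smul_eq_zero {x g₁ g₂ : R}
    (hx : IsSMulRegular M x) (hg : IsWeaklyRegular M [g₁, g₂]) {m : QuotSMulTop x M}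
    (h₁ : g₁ • m = 0) (h₂ : g₂ • m = 0) : m = 0 := by
  rw [isWeaklyRegular_cons_iff, isWeaklyRegular_singleton_iff] at hg
  obtain ⟨hg₁, hg₂⟩ := hg
  obtain ⟨z, rfl⟩ := Submodule.Quotient.mk_surjective _ m
  simp only [← Submodule.Quotient.mk_smul, Submodule.Quotient.mk_eq_zero,
    Submodule.mem_smul_pointwise_iff_exists] at h₁ h₂ ⊢
  obtain ⟨u, -, hu⟩ := h₁
  obtain ⟨v, -, hv⟩ := h₂
  have huv : g₂ • u = g₁ • v := hx <| by
    change x • g₂ • u = x • g₁ • v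
    rw [smul_comm x g₂, hu, smul_comm x g₁, hv, smul_comm]
  obtain ⟨t, -, ht⟩ := (Submodule.mem_smul_pointwise_iff_exists _ _ _).mp <|
    mem_of_isSMulRegular_quotient_of_smul_mem hg₂ <|
      huv ▸ Submodule.smul_mem_pointwise_smul v g₁ ⊤ trivial
  exact ⟨t, trivial, hg₁ <| by
    change g₁ • x • t = g₁ • z
    rw [smul_comm, ht, hu]⟩

theorem RingTheory.Sequence.IsWeaklyRegular.isRegular_of_forall_mem {rs : List R}
    (h : IsWeaklyRegular R rs) {I : Ideal R} (hI : I ≠ ⊤) (hrs : ∀ r ∈ rs, r ∈ I) :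
    IsRegular R rs := by
  refine ⟨h, fun htop => hI (top_le_iff.mp ?_)⟩
  rwa [htop, smul_eq_mul, Ideal.mul_top, Ideal.ofList, Ideal.span_le]

variable [IsNoetherianRing R]

theorem IsSMulRegular.notMem_of_mem_associatedPrimes {r : R} (hr : IsSMulRegular M r)
    {P : Ideal R} (hP : P ∈ associatedPrimes R M) : r ∉ P := fun hrP => by
  have hr' : r ∈ ⋃ P ∈ associatedPrimes R M, (P : Set R) := Set.mem_biUnion hP hrP
  rw [biUnion_associatedPrimes_eq_compl_regular] at hr'
  exact hr' hr

theorem QuotSMulTop.notMem_associatedPrimes_of_mem {x g₁ g₂ : R} (hx : IsSMulRegular M x)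
    (hg : IsWeaklyRegular M [g₁, g₂]) {P : Ideal R} (hg₁ : g₁ ∈ P) (hg₂ : g₂ ∈ P) :
    P ∉ associatedPrimes R (QuotSMulTop x M) := fun hP => by
  obtain ⟨hPprime, m, rfl⟩ := isAssociatedPrime_iff.mp hP
  rw [Submodule.mem_colon_singleton, Submodule.mem_bot] at hg₁ hg₂
  have hm := QuotSMulTop.eq_zero_of_smul_eq_zero_of_smul_eq_zero hx hg hg₁ hg₂
  refine hPprime.ne_top (eq_top_iff.mpr fun r _ => ?_)
  simp [Submodule.mem_colon_singleton, hm]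

end RegularSequences

section PrimeAvoidance

variable {k R M V : Type*} [Field k] [Infinite k] [CommRing R] [IsNoetherianRing R] [Algebra k R]
  [AddCommGroup M] [Module R M] [Module.Finite R M] [AddCommGroup V] [Module k V]

theorem exists_isSMulRegular_apply (L : V →ₗ[k] R)
    (hL : ∀ P ∈ associatedPrimes R M, ¬∀ v, L v ∈ P) : ∃ v, IsSMulRegular M (L v) := by
  by_contra! h
  have : Finite (associatedPrimes R M) := (associatedPrimes.finite R M).to_subtype
  obtain ⟨⟨P, hP⟩, hPtop⟩ := Subspace.exists_eq_top_of_iUnion_eq_univ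
      (p := fun P : associatedPrimes R M => (P.1.restrictScalars k).comap L) <| by
    refine Set.eq_univ_of_forall fun v => ?_
    have hv : L v ∈ ⋃ P ∈ associatedPrimes R M, (P : Set R) := by
      rw [biUnion_associatedPrimes_eq_compl_regular]
      exact h v
    simpa using hv
  exact hL P hP fun v => (hPtop ▸ Submodule.mem_top : v ∈ (P.restrictScalars k).comap L)

theorem exists_isWeaklyRegular_pair_apply (L : V →ₗ[k] R) {g₁ g₂ : R}
    (hg : IsWeaklyRegular M [g₁, g₂])
    (hL : ∀ P : Ideal R, P.IsPrime → (∀ v, L v ∈ P) → g₁ ∈ P ∧ g₂ ∈ P) :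
    ∃ a b, IsWeaklyRegular M [L a, L b] := by
  have hg₁ : IsSMulRegular M g₁ := ((isWeaklyRegular_cons_iff _ _ _).mp hg).1
  obtain ⟨a, ha⟩ := exists_isSMulRegular_apply L fun P hP hLP =>
    hg₁.notMem_of_mem_associatedPrimes hP (hL P hP.isPrime hLP).1
  obtain ⟨b, hb⟩ := exists_isSMulRegular_apply (M := QuotSMulTop (L a) M) L fun P hP hLP =>
    have ⟨h₁, h₂⟩ := hL P hP.isPrime hLP
    QuotSMulTop.notMem_associatedPrimes_of_mem ha hg h₁ h₂ hP
  exact ⟨a, b, (isWeaklyRegular_cons_iff _ _ _).mpr ⟨ha, (isWeaklyRegular_singleton_iff _ _).mpr hb⟩⟩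

end PrimeAvoidance

namespace MvPolynomial

variable {σ R : Type*}

theorem mem_idealOfVars_iff [CommSemiring R] {p : MvPolynomial σ R} :
    p ∈ idealOfVars σ R ↔ constantCoeff p = 0 := by
  rw [← pow_one (idealOfVars σ R), mem_pow_idealOfVars_iff']
  simp [Finsupp.degree_eq_zero_iff, constantCoeff_eq]

theorem IsHomogeneous.mem_idealOfVars [CommSemiring R] {φ : MvPolynomial σ R} {e : ℕ}
    (hφ : φ.IsHomogeneous e) (he : 0 < e) : φ ∈ idealOfVars σ R :=
  mem_idealOfVars_iff.mpr <| hφ.coeff_eq_zero (by simp; omega)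

theorem isHomogeneous_sum_smul [CommSemiring R] {ι : Type*} [Fintype ι]
    {M : ι → MvPolynomial σ R} {d : ℕ} (hM : ∀ i, (M i).IsHomogeneous d) (c : ι → R) :
    (∑ i, c i • M i).IsHomogeneous d :=
  IsHomogeneous.sum _ _ _ fun i _ => by
    rw [smul_eq_C_mul]
    exact (hM i).C_mul (c i)

theorem map_idealOfVars [CommSemiring R] {S : Type*} [Semiring S] (f : MvPolynomial σ R →+* S) :
    (idealOfVars σ R).map f = Ideal.span (Set.range fun i => f (X i)) := by
  rw [Ideal.map_span, ← Set.range_comp]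
  rfl

theorem map_idealOfVars_le_of_X_pow_mem [CommSemiring R] {A : Type*} [CommSemiring A]
    (f : MvPolynomial σ R →+* A) {P : Ideal A} (hP : P.IsPrime) (d : ℕ)
    (h : ∀ i, f (X i ^ d) ∈ P) : (idealOfVars σ R).map f ≤ P := by
  rw [map_idealOfVars, Ideal.span_le]
  rintro _ ⟨i, rfl⟩
  exact hP.mem_of_pow_mem d (map_pow f (X i) d ▸ h i)

variable {K : Type*} [Field K] {𝔭 : Ideal (MvPolynomial σ K)}

theorem le_idealOfVars_of_homogeneousComponent_mem (h𝔭 : 𝔭 ≠ ⊤)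
    (hhom : ∀ f ∈ 𝔭, ∀ i, homogeneousComponent i f ∈ 𝔭) : 𝔭 ≤ idealOfVars σ K := by
  intro p hp
  rw [mem_idealOfVars_iff]
  by_contra hp0
  refine h𝔭 (Ideal.eq_top_of_isUnit_mem _ (hhom p hp 0) ?_)
  rw [homogeneousComponent_zero]
  exact (isUnit_iff_ne_zero.mpr hp0).map C

theorem map_idealOfVars_ne_top_of_homogeneousComponent_mem (h𝔭 : 𝔭 ≠ ⊤)
    (hhom : ∀ f ∈ 𝔭, ∀ i, homogeneousComponent i f ∈ 𝔭) :
    (idealOfVars σ K).map (Ideal.Quotient.mk 𝔭) ≠ ⊤ := by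
  intro htop
  have h := Ideal.comap_map_of_surjective _ (Ideal.Quotient.mk_surjective (I := 𝔭)) (idealOfVars σ K)
  rw [htop, Ideal.comap_top, ← RingHom.ker_eq_comap_bot, Ideal.mk_ker,
    sup_eq_left.mpr (le_idealOfVars_of_homogeneousComponent_mem h𝔭 hhom)] at h
  simpa using mem_idealOfVars_iff.mp (h ▸ Submodule.mem_top : (1 : MvPolynomial σ K) ∈ _)

end MvPolynomial

theorem statement6_general {k : Type*} [Field k] [Infinite k] (n d N : ℕ)
    (hd : 1 ≤ d)
    (M : Fin N → MvPolynomial (Fin (n + 1)) k)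
    (hMmon : ∀ i : Fin N, ∃ σ : Fin (n + 1) →₀ ℕ,
      (σ.sum fun _ e => e) = d ∧ M i = MvPolynomial.monomial σ 1)
    (hMall : ∀ σ : Fin (n + 1) →₀ ℕ, (σ.sum fun _ e => e) = d →
      ∃! i : Fin N, M i = MvPolynomial.monomial σ 1)
    (𝔭 : Ideal (MvPolynomial (Fin (n + 1)) k)) (h𝔭ne : 𝔭 ≠ ⊤)
    (h𝔭hom : ∀ f ∈ 𝔭, ∀ i : ℕ, MvPolynomial.homogeneousComponent i f ∈ 𝔭) :
    {ab : Fin 2 × Fin N → k |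
      RingTheory.Sequence.IsRegular (MvPolynomial (Fin (n + 1)) k ⧸ 𝔭)
        [Ideal.Quotient.mk 𝔭 (∑ j : Fin N, ab (0, j) • M j),
         Ideal.Quotient.mk 𝔭 (∑ j : Fin N, ab (1, j) • M j)]}.Nonempty ↔
    ∃ g₁ g₂ : MvPolynomial (Fin (n + 1)) k,
      (∃ e : ℕ, 0 < e ∧ g₁.IsHomogeneous e) ∧ (∃ e : ℕ, 0 < e ∧ g₂.IsHomogeneous e) ∧
      Ideal.Quotient.mk 𝔭 g₁ ∈ Ideal.span (Set.range fun i : Fin (n + 1) =>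
        Ideal.Quotient.mk 𝔭 (MvPolynomial.X i)) ∧
      Ideal.Quotient.mk 𝔭 g₂ ∈ Ideal.span (Set.range fun i : Fin (n + 1) =>
        Ideal.Quotient.mk 𝔭 (MvPolynomial.X i)) ∧
      RingTheory.Sequence.IsRegular (MvPolynomial (Fin (n + 1)) k ⧸ 𝔭)
        [Ideal.Quotient.mk 𝔭 g₁, Ideal.Quotient.mk 𝔭 g₂] := by
  rw [← map_idealOfVars]
  let L : (Fin N → k) →ₗ[k] MvPolynomial (Fin (n + 1)) k ⧸ 𝔭 :=
    (Ideal.Quotient.mkₐ k 𝔭).toLinearMap ∘ₗ Fintype.linearCombination k M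
  have hLhom : ∀ c : Fin N → k, (∑ j, c j • M j).IsHomogeneous d :=
    isHomogeneous_sum_smul fun j =>
      have ⟨_, hσ, hMj⟩ := hMmon j
      hMj ▸ isHomogeneous_monomial 1 hσ
  have hLmem (c : Fin N → k) : L c ∈ (idealOfVars _ k).map (Ideal.Quotient.mk 𝔭) :=
    Ideal.mem_map_of_mem _ ((hLhom c).mem_idealOfVars hd)
  constructor
  · rintro ⟨ab, hab⟩
    exact ⟨_, _, ⟨d, hd, hLhom _⟩, ⟨d, hd, hLhom _⟩, hLmem _, hLmem _, hab⟩
  · rintro ⟨g₁, g₂, -, -, hg₁, hg₂, hreg⟩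
    have hL (P : Ideal _) (hP : P.IsPrime) (hLP : ∀ b, L b ∈ P) :
        (idealOfVars _ k).map (Ideal.Quotient.mk 𝔭) ≤ P := by
      refine map_idealOfVars_le_of_X_pow_mem _ hP d fun l => ?_
      obtain ⟨j, hj, -⟩ := hMall (Finsupp.single l d) (Finsupp.sum_single_index rfl)
      simpa [L, hj, X_pow_eq_monomial] using hLP (Pi.single j 1)
    obtain ⟨a, b, hab⟩ := exists_isWeaklyRegular_pair_apply L hreg.toIsWeaklyRegular
      fun P hP hLP => ⟨hL P hP hLP hg₁, hL P hP hLP hg₂⟩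
    refine ⟨fun p => ![a, b] p.1 p.2, ?_⟩
    show IsRegular _ [L a, L b]
    refine hab.isRegular_of_forall_mem
      (map_idealOfVars_ne_top_of_homogeneousComponent_mem h𝔭ne h𝔭hom) (by simp [hLmem])

/-- over an infinite field `k`, the locus
`G_2 = {(a,b) : (f̄_a, f̄_b) is an R-regular sequence}` is nonempty iff `depth R ≥ 2`,
i.e. iff some pair of homogeneous elements of positive degree of the irrelevant maximal
ideal `R_+` forms an `R`-regular sequence. -/
theorem statement6 {k : Type*} [Field k] [Infinite k] (n d N : ℕ) (hn : 1 ≤ n)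
    (hd : 1 ≤ d) (hN : N = (n + d).choose d)
    (M : Fin N → MvPolynomial (Fin (n + 1)) k)
    (hMmon : ∀ i : Fin N, ∃ σ : Fin (n + 1) →₀ ℕ,
      (σ.sum fun _ e => e) = d ∧ M i = MvPolynomial.monomial σ 1)
    (hMall : ∀ σ : Fin (n + 1) →₀ ℕ, (σ.sum fun _ e => e) = d →
      ∃! i : Fin N, M i = MvPolynomial.monomial σ 1)
    (𝔭 : Ideal (MvPolynomial (Fin (n + 1)) k)) (h𝔭 : 𝔭.IsPrime) (h𝔭ne : 𝔭 ≠ ⊤)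
    (h𝔭hom : ∀ f ∈ 𝔭, ∀ i : ℕ, MvPolynomial.homogeneousComponent i f ∈ 𝔭) :
    {ab : Fin 2 × Fin N → k |
      RingTheory.Sequence.IsRegular (MvPolynomial (Fin (n + 1)) k ⧸ 𝔭)
        [Ideal.Quotient.mk 𝔭 (∑ j : Fin N, ab (0, j) • M j),
         Ideal.Quotient.mk 𝔭 (∑ j : Fin N, ab (1, j) • M j)]}.Nonempty ↔
    ∃ g₁ g₂ : MvPolynomial (Fin (n + 1)) k,
      (∃ e : ℕ, 0 < e ∧ g₁.IsHomogeneous e) ∧ (∃ e : ℕ, 0 < e ∧ g₂.IsHomogeneous e) ∧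
      Ideal.Quotient.mk 𝔭 g₁ ∈ Ideal.span (Set.range fun i : Fin (n + 1) =>
        Ideal.Quotient.mk 𝔭 (MvPolynomial.X i)) ∧
      Ideal.Quotient.mk 𝔭 g₂ ∈ Ideal.span (Set.range fun i : Fin (n + 1) =>
        Ideal.Quotient.mk 𝔭 (MvPolynomial.X i)) ∧
      RingTheory.Sequence.IsRegular (MvPolynomial (Fin (n + 1)) k ⧸ 𝔭)
        [Ideal.Quotient.mk 𝔭 g₁, Ideal.Quotient.mk 𝔭 g₂] :=
  statement6_general n d N hd M hMmon hMall 𝔭 h𝔭ne h𝔭hom
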